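/- Let n ≥ 1, p ∈ ℝ, and let ρ be a 2^n × 2^n Hermitian matrix. Then the purity of ρ after one layer of n-fold local depolarizing noise is given exactly in the Pauli basis by Tr( (D_p^{⊗n}(ρ))² ) = 2^{−n} · Σ_{P} p^{2·w(P)} · (Tr(P·ρ))², where the sum runs over all Pauli strings P on n qubits. -/

import Mathlib

open Matrix BigOperators

noncomputable section

/-- The four single-qubit Pauli matrices: σ₀ = I, σ₁ = X, σ₂ = Y, σ₃ = Z. -/
def pauli : Fin 4 → Matrix (Fin 2) (Fin 2) ℂ :=
  ![1, !![0, 1; 1, 0], !![0, -Complex.I; Complex.I, 0], !![1, 0; 0, -1]]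

/-- The 2^n × 2^n matrix associated to a Pauli string `P : Fin n → Fin 4`,
given by the n-fold Kronecker product ⊗ᵢ σ_{P i}. -/
def pauliMatrix {n : ℕ} (P : Fin n → Fin 4) :
    Matrix (Fin n → Fin 2) (Fin n → Fin 2) ℂ :=
  Matrix.of fun x y => ∏ i, pauli (P i) (x i) (y i)

/-- The weight of a Pauli string: the number of sites acted on nontrivially. -/
def pweight {n : ℕ} (P : Fin n → Fin 4) : ℕ :=
  (Finset.univ.filter fun i => P i ≠ 0).card

/-- The single-qubit depolarizing channel `D_p` acting on qubit `i` of an n-qubit matrix: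
`M ↦ p·M + (1-p)·Tr_i(M) ⊗ (I/2)_i`, written entrywise. -/
def depolSite {n : ℕ} (p : ℝ) (i : Fin n)
    (M : Matrix (Fin n → Fin 2) (Fin n → Fin 2) ℂ) :
    Matrix (Fin n → Fin 2) (Fin n → Fin 2) ℂ :=
  Matrix.of fun x y =>
    (p : ℂ) * M x y +
      ((1 - p : ℝ) : ℂ) *
        (if x i = y i then
          (2 : ℂ)⁻¹ * ∑ v : Fin 2, M (Function.update x i v) (Function.update y i v)
        else 0)

/-- The n-fold local depolarizing channel `D_p^{⊗n}`, i.e. the (commuting) composition of the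
single-qubit depolarizing channels on each of the n sites.  It is the unique linear map with
`D_p^{⊗n}(M₁ ⊗ ⋯ ⊗ Mₙ) = D_p(M₁) ⊗ ⋯ ⊗ D_p(Mₙ)`. -/
def depolN {n : ℕ} (p : ℝ)
    (M : Matrix (Fin n → Fin 2) (Fin n → Fin 2) ℂ) :
    Matrix (Fin n → Fin 2) (Fin n → Fin 2) ℂ :=
  (List.finRange n).foldr (fun i acc => depolSite p i acc) M

/-!
The Pauli strings are orthogonal for the trace form, `tr (P Q) = 2ⁿ δ_{PQ}`, and complete, so
`ρ = 2⁻ⁿ ∑_P tr (P ρ) P`. The channel `D_p^{⊗n}` is linear, and on each site it fixes `σ₀` and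
multiplies the traceless `σ₁, σ₂, σ₃` by `p`; hence `D_p^{⊗n} P = p^{w(P)} P`, and the purity of
`D_p^{⊗n} ρ = 2⁻ⁿ ∑_P p^{w(P)} tr (P ρ) P` follows from orthogonality (Parseval).
-/

def piKron {ι m R : Type*} [Fintype ι] [CommMonoid R] (A : ι → Matrix m m R) :
    Matrix (ι → m) (ι → m) R :=
  of fun x y => ∏ i, A i (x i) (y i)

theorem trace_piKron_mul_piKron {ι m R : Type*} [Fintype ι] [DecidableEq ι] [Fintype m]
    [CommSemiring R] (A B : ι → Matrix m m R) :
    trace (piKron A * piKron B) = ∏ i, trace (A i * B i) := by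
  simp only [trace, diag, mul_apply, piKron, of_apply, ← Finset.prod_mul_distrib]
  simp_rw [Fintype.prod_sum]

theorem prod_apply_update_update {ι m R : Type*} [Fintype ι] [DecidableEq ι] [CommMonoid R]
    (A : ι → Matrix m m R) (x y : ι → m) (i : ι) (v : m) :
    ∏ j, A j (Function.update x i v j) (Function.update y i v j)
      = A i v v * ∏ j ∈ {i}ᶜ, A j (x j) (y j) := by
  rw [Fintype.prod_eq_mul_prod_compl i]
  simp only [Function.update_self]
  congr 1
  refine Finset.prod_congr rfl fun j hj => ?_
  have hji : j ≠ i := by simpa using hj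
  rw [Function.update_of_ne hji, Function.update_of_ne hji]

theorem pauliMatrix_eq_piKron {n : ℕ} (P : Fin n → Fin 4) :
    pauliMatrix P = piKron fun i => pauli (P i) := rfl

theorem pauli_zero : pauli 0 = 1 := rfl

theorem sum_pauli_apply_self (k : Fin 4) : ∑ v, pauli k v v = if k = 0 then 2 else 0 := by
  fin_cases k <;> simp [pauli, Fin.sum_univ_two]

theorem trace_pauli_mul_pauli (j k : Fin 4) :
    trace (pauli j * pauli k) = if j = k then 2 else 0 := by
  fin_cases j <;> fin_cases k <;> simp [pauli, trace, Fin.sum_univ_two] <;> norm_num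

theorem sum_pauli_apply_mul_pauli_apply (a b c d : Fin 2) :
    ∑ k, pauli k a b * pauli k c d = if a = d ∧ b = c then 2 else 0 := by
  fin_cases a <;> fin_cases b <;> fin_cases c <;> fin_cases d <;>
    simp [pauli, Fin.sum_univ_four] <;> norm_num

section PauliStrings

variable {n : ℕ}

theorem trace_pauliMatrix_mul_pauliMatrix (P Q : Fin n → Fin 4) :
    trace (pauliMatrix P * pauliMatrix Q) = if P = Q then 2 ^ n else 0 := by
  simp only [pauliMatrix_eq_piKron, trace_piKron_mul_piKron, trace_pauli_mul_pauli,
    Fintype.prod_ite_zero, Finset.prod_const, Finset.card_univ, Fintype.card_fin, funext_iff]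

theorem sum_pauliMatrix_apply_mul_apply (a b c d : Fin n → Fin 2) :
    ∑ P : Fin n → Fin 4, pauliMatrix P a b * pauliMatrix P c d
      = if a = d ∧ b = c then 2 ^ n else 0 := by
  simp only [pauliMatrix, of_apply, ← Finset.prod_mul_distrib]
  rw [← Fintype.prod_sum fun i k => pauli k (a i) (b i) * pauli k (c i) (d i)]
  simp only [sum_pauli_apply_mul_pauli_apply, Fintype.prod_ite_zero, Finset.prod_const,
    Finset.card_univ, Fintype.card_fin, funext_iff, forall_and]

theorem sum_trace_pauliMatrix_mul_smul (ρ : Matrix (Fin n → Fin 2) (Fin n → Fin 2) ℂ) :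
    ∑ P, trace (pauliMatrix P * ρ) • pauliMatrix P = (2 : ℂ) ^ n • ρ := by
  ext x y
  simp only [Matrix.sum_apply, Matrix.smul_apply, trace, diag, mul_apply, smul_eq_mul,
    Finset.sum_mul]
  calc ∑ P, ∑ a, ∑ b, pauliMatrix P a b * ρ b a * pauliMatrix P x y
      = ∑ a, ∑ b, ρ b a * ∑ P, pauliMatrix P a b * pauliMatrix P x y := by
        simp only [Finset.mul_sum]
        rw [Finset.sum_comm]
        refine Finset.sum_congr rfl fun a _ => ?_
        rw [Finset.sum_comm]
        refine Finset.sum_congr rfl fun b _ => Finset.sum_congr rfl fun P _ => by ring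
    _ = 2 ^ n * ρ x y := by
        simp [sum_pauliMatrix_apply_mul_apply, ite_and, mul_comm]

theorem eq_inv_two_pow_smul_sum_pauliMatrix
    (ρ : Matrix (Fin n → Fin 2) (Fin n → Fin 2) ℂ) :
    ρ = ((2 : ℂ) ^ n)⁻¹ • ∑ P, trace (pauliMatrix P * ρ) • pauliMatrix P := by
  rw [sum_trace_pauliMatrix_mul_smul, inv_smul_smul₀ (pow_ne_zero n two_ne_zero)]

theorem trace_sum_smul_pauliMatrix_mul_sum_smul (c d : (Fin n → Fin 4) → ℂ) :
    trace ((∑ P, c P • pauliMatrix P) * ∑ Q, d Q • pauliMatrix Q)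
      = 2 ^ n * ∑ P, c P * d P := by
  simp only [Finset.sum_mul, Finset.mul_sum, trace_sum, smul_mul_smul_comm, trace_smul,
    trace_pauliMatrix_mul_pauliMatrix, smul_eq_mul, mul_ite, mul_zero, Finset.sum_ite_eq',
    Finset.mem_univ, if_true]
  exact Finset.sum_congr rfl fun P _ => by ring

end PauliStrings

section Depolarizing

variable {n : ℕ} (p : ℝ)

theorem depolSite_isLinearMap (i : Fin n) : IsLinearMap ℂ (depolSite p i) where
  map_add A B := by
    ext x y
    simp only [depolSite, of_apply, Matrix.add_apply, Finset.sum_add_distrib]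
    split_ifs <;> ring
  map_smul c A := by
    ext x y
    simp only [depolSite, of_apply, Matrix.smul_apply, smul_eq_mul, ← Finset.mul_sum]
    split_ifs <;> ring

theorem depolN_isLinearMap : IsLinearMap ℂ (depolN (n := n) p) := by
  unfold depolN
  induction List.finRange n with
  | nil => exact LinearMap.id.isLinear
  | cons i l ih =>
    have hi := depolSite_isLinearMap p i
    exact ⟨fun A B => by simp only [List.foldr_cons, ih.map_add, hi.map_add],
      fun c A => by simp only [List.foldr_cons, ih.map_smul, hi.map_smul]⟩

theorem depolSite_pauliMatrix (i : Fin n) (P : Fin n → Fin 4) :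
    depolSite p i (pauliMatrix P) = (if P i = 0 then 1 else (p : ℂ)) • pauliMatrix P := by
  ext x y
  -- the partial trace over site `i` keeps `σ₀ = 1` and kills the traceless `σ₁, σ₂, σ₃`
  simp only [depolSite, pauliMatrix, of_apply, Matrix.smul_apply, smul_eq_mul,
    prod_apply_update_update, ← Finset.sum_mul, sum_pauli_apply_self]
  rw [Fintype.prod_eq_mul_prod_compl i]
  by_cases hP : P i = 0
  · simp only [hP, pauli_zero, one_apply]
    split_ifs <;> push_cast <;> ring
  · simp only [hP, if_false]
    split_ifs <;> push_cast <;> ring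

theorem depolN_pauliMatrix (P : Fin n → Fin 4) :
    depolN p (pauliMatrix P) = (p : ℂ) ^ pweight P • pauliMatrix P := by
  have hfold : ∀ l : List (Fin n), l.foldr (fun i acc => depolSite p i acc) (pauliMatrix P)
      = (l.map fun i => if P i = 0 then 1 else (p : ℂ)).prod • pauliMatrix P := by
    intro l
    induction l with
    | nil => simp
    | cons i l ih =>
      rw [List.foldr_cons, ih, (depolSite_isLinearMap p i).map_smul, depolSite_pauliMatrix,
        smul_smul, List.map_cons, List.prod_cons, mul_comm]
  rw [depolN, hfold, ← Fin.prod_univ_def, Finset.prod_ite, Finset.prod_const_one, one_mul,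
    Finset.prod_const, pweight]

theorem depolN_eq_inv_two_pow_smul_sum_pauliMatrix
    (ρ : Matrix (Fin n → Fin 2) (Fin n → Fin 2) ℂ) :
    depolN p ρ = ((2 : ℂ) ^ n)⁻¹ •
      ∑ P, ((p : ℂ) ^ pweight P * trace (pauliMatrix P * ρ)) • pauliMatrix P := by
  let D := IsLinearMap.mk' _ (depolN_isLinearMap (n := n) p)
  calc depolN p ρ
      = D (((2 : ℂ) ^ n)⁻¹ • ∑ P, trace (pauliMatrix P * ρ) • pauliMatrix P) := by
        rw [← eq_inv_two_pow_smul_sum_pauliMatrix]; rfl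
    _ = _ := by
        simp only [map_smul, map_sum, D, IsLinearMap.mk'_apply, depolN_pauliMatrix, smul_smul,
          mul_comm]

end Depolarizing

theorem purity_depolN_pauli_expansion_general {n : ℕ} (p : ℝ)
    (ρ : Matrix (Fin n → Fin 2) (Fin n → Fin 2) ℂ) :
    (depolN p ρ * depolN p ρ).trace
      = ((2 : ℂ) ^ n)⁻¹ *
          ∑ P : Fin n → Fin 4, (p : ℂ) ^ (2 * pweight P) * ((pauliMatrix P * ρ).trace) ^ 2 := by
  rw [depolN_eq_inv_two_pow_smul_sum_pauliMatrix, smul_mul_smul_comm, trace_smul,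
    trace_sum_smul_pauliMatrix_mul_sum_smul, smul_eq_mul]
  have h2n : (2 : ℂ) ^ n ≠ 0 := pow_ne_zero n two_ne_zero
  field_simp
  simp only [← pow_mul']

/-- the purity after one layer of n-fold local depolarizing noise, expanded in
the Pauli basis: `Tr((D_p^{⊗n}(ρ))²) = 2^{-n} Σ_P p^{2 w(P)} (Tr(P·ρ))²`. -/
theorem purity_depolN_pauli_expansion {n : ℕ} (hn : 1 ≤ n) (p : ℝ)
    (ρ : Matrix (Fin n → Fin 2) (Fin n → Fin 2) ℂ) (hherm : ρ.IsHermitian) :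
    (depolN p ρ * depolN p ρ).trace
      = ((2 : ℂ) ^ n)⁻¹ *
          ∑ P : Fin n → Fin 4, (p : ℂ) ^ (2 * pweight P) * ((pauliMatrix P * ρ).trace) ^ 2 :=
  purity_depolN_pauli_expansion_general p ρ
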